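/- Let p ≡ 1 (mod 6) be a prime, r ≥ 2, and let χ be a nontrivial cubic multiplicative character of F_{p^r} whose restriction to the prime field F_p is nontrivial. Suppose there exists β ∈ F_p such that X^r − β is irreducible over F_p, and let α ∈ F_{p^r} be a root of X^r − β. Then G_r(1,χ) = χ̄(r) · G_1(1,χ) · B_{r,1}(α), where B_{r,1}(α) = Σ_{z_1,…,z_{r−1} ∈ F_p} χ(1 + Σ_{i=1}^{r−1} z_i α^i) and G_1(1,χ) is the Gauss sum over F_p of the restriction of χ. Moreover, with ζ_3 = exp(2πi/3), one can write B_{r,1}(α) = B_0 + B_1 ζ_3 + B_2 ζ_3² with nonnegative integers B_0, B_1, B_2 satisfying B_0 + B_1 + B_2 = p^{r−1} and B_0² + B_1² + B_2² − B_0B_1 − B_1B_2 − B_2B_0 = p^{r−1}. -/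

import Mathlib

/-!
In the basis `1, α, …, α^(r-1)` write `y = c + w` with `c ∈ F_p` and `w = Σ z_i α^i`.
Multiplication by `α^i` (`0 < i < r`) moves every basis line to another one, so `Tr(α^i) = 0`
and `Tr(y) = r c`; moreover `p ∤ r`, since `X^r - β` is separable over the perfect field `F_p`.
Scaling `z` by `c` shows that the inner sum `Σ_w χ(c + w)` is `χ(c) B_{r,1}(α)` for `c ≠ 0`,
and it vanishes for `c = 0` because χ is nontrivial on `F_p`. What is left is the Gauss sum over
`F_p` with additive character `x ↦ ζ_p^(r x)`, which is `χ̄(r) G_1(1,χ)`.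
Comparing `|G_r|² = p^r` with `|G_1|² = p` gives `|B_{r,1}(α)|² = p^(r-1)`. Finally `B_{r,1}(α)`
is a sum of `p^(r-1)` cube roots of unity; counting how often each occurs gives `B_0, B_1, B_2`,
and `|B_0 + B_1 ζ_3 + B_2 ζ_3²|²` is the stated quadratic form.
-/

open Finset

/-- `ζ_p = exp(2πi/p)`. -/
noncomputable def zetaC (p : ℕ) : ℂ := Complex.exp (2 * (Real.pi : ℂ) * Complex.I / (p : ℂ))

/-- `ζ_3 = exp(2πi/3)`. -/
noncomputable def zeta3 : ℂ := Complex.exp (2 * (Real.pi : ℂ) * Complex.I / 3)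

/-- The Gauss sum `G_n(1,χ) = Σ_{y ∈ F} χ(y) ζ_p^{Tr(y)}` of a function `χ : F → ℂ`
over a finite field `F` of characteristic `p`. -/
noncomputable def gaussSumF (p : ℕ) (F : Type) [Field F] [Fintype F] [Algebra (ZMod p) F]
    (χ : F → ℂ) : ℂ :=
  ∑ y : F, χ y * zetaC p ^ (Algebra.trace (ZMod p) F y).val

/-- The Gauss sum `G_1(1,χ) = Σ_{y ∈ F_p} χ(y) ζ_p^y` over the prime field `F_p = ZMod p`. -/
noncomputable def gaussSumP (p : ℕ) [NeZero p] (χ : ZMod p → ℂ) : ℂ :=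
  ∑ y : ZMod p, χ y * zetaC p ^ y.val

/-- The factor `B_{r,1}(α) = Σ_{z_1,…,z_{r−1} ∈ F_p} χ(1 + Σ_i z_i α^i)`. -/
noncomputable def Bfactor (p : ℕ) [NeZero p] (r : ℕ) (K : Type) [Field K]
    [Algebra (ZMod p) K] (χ : K → ℂ) (α : K) : ℂ :=
  ∑ z : Fin (r - 1) → ZMod p,
    χ (1 + ∑ i : Fin (r - 1), algebraMap (ZMod p) K (z i) * α ^ ((i : ℕ) + 1))

open Polynomial

namespace MulChar

variable {F K R : Type*} [Field F] [CommRing K] [Nontrivial K] [CommMonoidWithZero R]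

def comap (f : F →+* K) (χ : MulChar K R) : MulChar F R where
  toFun x := χ (f x)
  map_one' := by simp
  map_mul' x y := by simp
  map_nonunit' x hx := by
    obtain rfl : x = 0 := not_not.mp (mt isUnit_iff_ne_zero.mpr hx)
    simp

@[simp]
lemma comap_apply (f : F →+* K) (χ : MulChar K R) (x : F) : χ.comap f x = χ (f x) := rfl

@[simp]
lemma comap_one (f : F →+* K) : (1 : MulChar K R).comap f = 1 :=
  MulChar.ext fun a => by simp [MulChar.one_apply (a.isUnit.map f)]

lemma apply_pow_orderOf {M : Type*} [CommMonoid M] (χ : MulChar M R) (a : Mˣ) :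
    χ a ^ orderOf χ = 1 := by
  rw [← χ.pow_apply_coe, pow_orderOf_eq_one, one_apply_coe]

end MulChar

lemma isPrimitiveRoot_zeta3 : IsPrimitiveRoot zeta3 3 :=
  Complex.isPrimitiveRoot_exp 3 (by norm_num)

lemma zeta3_sq_add_zeta3_add_one : zeta3 ^ 2 + zeta3 + 1 = 0 := by
  have h := isPrimitiveRoot_zeta3.geom_sum_eq_zero (by norm_num)
  simp only [Finset.sum_range_succ, Finset.sum_range_zero] at h
  linear_combination h

lemma star_zeta3 : star zeta3 = zeta3 ^ 2 := by
  rw [← starRingEnd_apply,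
    ← Complex.inv_eq_conj (isPrimitiveRoot_zeta3.norm'_eq_one three_ne_zero)]
  exact inv_eq_of_mul_eq_one_left (by rw [← pow_succ, isPrimitiveRoot_zeta3.pow_eq_one])

lemma mul_star_intCast_add_mul_zeta3 (a b c : ℤ) :
    ((a : ℂ) + b * zeta3 + c * zeta3 ^ 2) * star ((a : ℂ) + b * zeta3 + c * zeta3 ^ 2) =
      ((a ^ 2 + b ^ 2 + c ^ 2 - a * b - b * c - c * a : ℤ) : ℂ) := by
  simp only [star_add, star_mul, star_pow, star_zeta3, star_intCast]
  push_cast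
  linear_combination (a * b + c * a * (zeta3 ^ 2 - zeta3 + 1) + b * c * (zeta3 ^ 3 - zeta3 + 1)
    + b ^ 2 * (zeta3 - 1) + c ^ 2 * (zeta3 ^ 3 + 1) * (zeta3 - 1) : ℂ) *
      zeta3_sq_add_zeta3_add_one

lemma exists_sum_eq_natCast_add_mul_zeta3 {ι : Type*} [Fintype ι] (f : ι → ℂ)
    (hf : ∀ i, f i ^ 3 = 1) :
    ∃ B0 B1 B2 : ℕ, ∑ i, f i = B0 + B1 * zeta3 + B2 * zeta3 ^ 2 ∧
      B0 + B1 + B2 = Fintype.card ι := by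
  classical
  choose k hk hkf using fun i => isPrimitiveRoot_zeta3.eq_pow_of_pow_eq_one (hf i)
  let g : ι → Fin 3 := fun i => ⟨k i, hk i⟩
  have hfg : ∀ i, f i = zeta3 ^ (g i : ℕ) := fun i => (hkf i).symm
  refine ⟨#{i | g i = 0}, #{i | g i = 1}, #{i | g i = 2}, ?_, ?_⟩
  · calc ∑ i, f i = ∑ j : Fin 3, ∑ i with g i = j, zeta3 ^ (j : ℕ) := by
          rw [← Finset.sum_fiberwise univ g]
          refine sum_congr rfl fun j _ => sum_congr rfl fun i hi => ?_
          rw [hfg, (mem_filter.mp hi).2]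
      _ = _ := by simp [Fin.sum_univ_three]
  · rw [← card_univ, card_eq_sum_card_fiberwise (s := univ) (f := g) (t := univ)
      (fun _ _ => mem_coe.2 (mem_univ _)), Fin.sum_univ_three]

lemma gaussSum_mul_star_gaussSum {F : Type*} [Field F] [Fintype F] {χ : MulChar F ℂ}
    (hχ : χ ≠ 1) {ψ : AddChar F ℂ} (hψ : ψ.IsPrimitive) :
    gaussSum χ ψ * star (gaussSum χ ψ) = Fintype.card F := by
  rw [star_gaussSum_eq, gaussSum_mul_gaussSum_eq_card hχ hψ]

lemma AddChar.IsPrimitive.compAddMonoidHom_trace {F K R : Type*} [Field F] [Field K]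
    [Algebra F K] [FiniteDimensional F K] [Algebra.IsSeparable F K] [CommMonoid R]
    {ψ : AddChar F R} (hψ : ψ.IsPrimitive) :
    (ψ.compAddMonoidHom (Algebra.trace F K).toAddMonoidHom).IsPrimitive := by
  refine AddChar.IsPrimitive.of_ne_one fun h => ?_
  obtain ⟨x, hx⟩ := AddChar.ne_one_iff.mp (by simpa using hψ one_ne_zero)
  obtain ⟨y, rfl⟩ := Algebra.trace_surjective F K x
  exact hx (by simpa using DFunLike.congr_fun h y)

section XPowSubC

variable {F : Type*} [Field F] {r : ℕ} {β : F}

lemma pos_of_irreducible_X_pow_sub_C (h : Irreducible (X ^ r - C β)) : 0 < r := by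
  simpa using h.natDegree_pos

lemma natCast_ne_zero_of_irreducible_X_pow_sub_C [PerfectField F]
    (h : Irreducible (X ^ r - C β)) : (r : F) ≠ 0 := by
  intro hr
  refine (separable_iff_derivative_ne_zero h).mp (PerfectField.separable_of_irreducible h) ?_
  simp [derivative_X_pow, hr]

lemma minpoly_eq_X_pow_sub_C {K : Type*} [Field K] [Algebra F K] {α : K}
    (h : Irreducible (X ^ r - C β)) (hα : α ^ r = algebraMap F K β) :
    minpoly F α = X ^ r - C β :=
  (minpoly.eq_of_irreducible_of_monic h (by simp [hα])
    (monic_X_pow_sub_C β (pos_of_irreducible_X_pow_sub_C h).ne')).symm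

end XPowSubC

section PowerBasis

variable {F K : Type*} [Field F] [Field K] [Algebra F K]

lemma trace_pow_eq_zero_of_basis {r : ℕ} {α : K} {β : F} (b : Module.Basis (Fin r) F K)
    (hb : ∀ i, b i = α ^ (i : ℕ)) (hα : α ^ r = algebraMap F K β) {i : ℕ} (hi0 : 0 < i)
    (hir : i < r) : Algebra.trace F K (α ^ i) = 0 := by
  classical
  rw [Algebra.trace_eq_matrix_trace b, Matrix.trace]
  refine sum_eq_zero fun j _ => ?_
  -- `α ^ i * α ^ j` is a multiple of `α ^ ((i + j) % r)`, and `(i + j) % r ≠ j`.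
  obtain ⟨k, c, hkj, hk⟩ : ∃ (k : Fin r) (c : F), j ≠ k ∧ α ^ (i + j) = c • b k := by
    by_cases h : i + (j : ℕ) < r
    · exact ⟨⟨i + j, h⟩, 1, by simp [Fin.ext_iff]; omega, by simp [hb]⟩
    · refine ⟨⟨i + j - r, by omega⟩, β, by simp [Fin.ext_iff]; omega, ?_⟩
      rw [hb, Algebra.smul_def, ← hα, ← pow_add]
      congr 1
      simp only
      omega
  rw [Matrix.diag_apply, Algebra.leftMulMatrix_eq_repr_mul, hb, ← pow_add, hk, map_smul,
    Finsupp.smul_apply, b.repr_self, Finsupp.single_eq_of_ne hkj, smul_zero]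

variable [FiniteDimensional F K] {r n : ℕ} {α : K} {β : F}

lemma exists_basis_pow_of_irreducible (hirr : Irreducible (X ^ r - C β))
    (hα : α ^ r = algebraMap F K β) (hr : Module.finrank F K = r) :
    ∃ b : Module.Basis (Fin r) F K, ∀ i, b i = α ^ (i : ℕ) := by
  have hdeg : (minpoly F α).natDegree = r := by
    rw [minpoly_eq_X_pow_sub_C hirr hα, natDegree_X_pow_sub_C]
  subst hdeg
  exact ⟨basisOfLinearIndependentOfCardEqFinrank' _ (linearIndependent_pow α) (by simp [hr]),
    fun i => by simp⟩

lemma trace_linearCombination_pow_succ_eq_zero (hirr : Irreducible (X ^ (n + 1) - C β))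
    (hα : α ^ (n + 1) = algebraMap F K β) (hn : Module.finrank F K = n + 1) (z : Fin n → F) :
    Algebra.trace F K (Fintype.linearCombination F (fun i : Fin n => α ^ ((i : ℕ) + 1)) z) =
      0 := by
  obtain ⟨b, hb⟩ := exists_basis_pow_of_irreducible hirr hα hn
  simp [Fintype.linearCombination_apply,
    trace_pow_eq_zero_of_basis b hb hα (Nat.succ_pos _) (Nat.succ_lt_succ (Fin.is_lt _))]

lemma bijective_coprod_linearCombination_pow_succ (hirr : Irreducible (X ^ (n + 1) - C β))
    (hα : α ^ (n + 1) = algebraMap F K β) (hn : Module.finrank F K = n + 1) :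
    Function.Bijective ((Algebra.linearMap F K).coprod
      (Fintype.linearCombination F fun i : Fin n => α ^ ((i : ℕ) + 1))) := by
  obtain ⟨b, hb⟩ := exists_basis_pow_of_irreducible hirr hα hn
  have h : ⇑((Algebra.linearMap F K).coprod
        (Fintype.linearCombination F fun i : Fin n => α ^ ((i : ℕ) + 1))) =
      b.equivFun.symm ∘ Fin.consEquiv fun _ => F := by
    ext ⟨c, z⟩
    simp [Fin.sum_univ_succ, hb, Fintype.linearCombination_apply, Algebra.algebraMap_eq_smul_one]
  rw [h]
  exact b.equivFun.symm.bijective.comp (Fin.consEquiv _).bijective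

end PowerBasis

section TraceDecomposition

variable {F K R V : Type*} [Field F] [Field K] [Algebra F K] [CommRing R]
  [AddCommGroup V] [Module F V]

lemma sum_mulChar_algebraMap_add [Fintype V] [NoZeroDivisors R] {χ : MulChar K R}
    (hχ : χ.comap (algebraMap F K) ≠ 1) (L : V →ₗ[F] K) (c : F) :
    ∑ v, χ (algebraMap F K c + L v) = χ (algebraMap F K c) * ∑ v, χ (1 + L v) := by
  have hscale : ∀ (a : F) (ha : a ≠ 0) (f : K → R),
      ∑ v, f (L (a • v)) = ∑ v, f (L v) := fun a ha f =>
    Fintype.sum_equiv (LinearEquiv.smulOfNeZero F V a ha).toEquiv _ _ fun _ => rfl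
  rcases eq_or_ne c 0 with rfl | hc
  · -- The sum is invariant under `v ↦ a • v`, which multiplies it by `χ a ≠ 1`.
    obtain ⟨a, ha⟩ := MulChar.ne_one_iff.mp hχ
    have hfix : χ (algebraMap F K a) * ∑ v, χ (L v) = ∑ v, χ (L v) := by
      rw [mul_sum, ← hscale a a.ne_zero]
      simp [Algebra.smul_def]
    simp only [map_zero, zero_add, χ.map_zero, zero_mul]
    by_contra hS
    exact ha (mul_right_cancel₀ hS (by simpa using hfix))
  · rw [← hscale c hc fun y => χ (algebraMap F K c + y), mul_sum]
    refine sum_congr rfl fun v _ => ?_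
    rw [← map_mul, map_smul, Algebra.smul_def, mul_add, mul_one]

lemma one_add_ne_zero_of_bijective_coprod {L : V →ₗ[F] K}
    (hL : Function.Bijective ((Algebra.linearMap F K).coprod L)) (v : V) : 1 + L v ≠ 0 := by
  simpa using hL.injective.ne (show ((1 : F), v) ≠ 0 by simp)

lemma gaussSum_comp_trace_eq_mul_sum [Fintype F] [Fintype K] [Fintype V] [IsDomain R]
    {χ : MulChar K R} (hχ : χ.comap (algebraMap F K) ≠ 1) (ψ : AddChar F R)
    (L : V →ₗ[F] K)
    (hL : Function.Bijective ((Algebra.linearMap F K).coprod L))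
    (htr : ∀ v, Algebra.trace F K (L v) = 0) :
    gaussSum χ (ψ.compAddMonoidHom (Algebra.trace F K).toAddMonoidHom) =
      gaussSum (χ.comap (algebraMap F K)) (ψ.mulShift (Module.finrank F K)) *
        ∑ v, χ (1 + L v) := by
  calc gaussSum χ (ψ.compAddMonoidHom (Algebra.trace F K).toAddMonoidHom)
      = ∑ x : F × V, χ (algebraMap F K x.1 + L x.2) *
          ψ (Algebra.trace F K (algebraMap F K x.1 + L x.2)) :=
        (Fintype.sum_bijective _ hL _ _ fun _ => rfl).symm
    _ = ∑ c : F, χ (algebraMap F K c) * ψ (Module.finrank F K * c) * ∑ v, χ (1 + L v) := by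
        rw [Fintype.sum_prod_type]
        refine sum_congr rfl fun c _ => ?_
        simp only [map_add, htr, add_zero, Algebra.trace_algebraMap, nsmul_eq_mul]
        rw [← sum_mul, sum_mulChar_algebraMap_add hχ, mul_right_comm]
    _ = _ := by simp [gaussSum, sum_mul]

lemma gaussSum_comp_trace_eq_star_mul_sum [Fintype F] [Fintype K] [Fintype V]
    {χ : MulChar K ℂ} (hχ : χ.comap (algebraMap F K) ≠ 1) (ψ : AddChar F ℂ)
    (L : V →ₗ[F] K)
    (hL : Function.Bijective ((Algebra.linearMap F K).coprod L))
    (htr : ∀ v, Algebra.trace F K (L v) = 0) (hd : (Module.finrank F K : F) ≠ 0) :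
    gaussSum χ (ψ.compAddMonoidHom (Algebra.trace F K).toAddMonoidHom) =
      star (χ (Module.finrank F K)) * gaussSum (χ.comap (algebraMap F K)) ψ *
        ∑ v, χ (1 + L v) := by
  have hshift := gaussSum_mulShift_eq (χ.comap (algebraMap F K)) ψ (Units.mk0 _ hd)
  rw [Units.val_mk0] at hshift
  rw [gaussSum_comp_trace_eq_mul_sum hχ ψ L hL htr, hshift, ← MulChar.star_apply',
    MulChar.comap_apply, map_natCast]

lemma card_mul_sum_mul_star_eq_card [Fintype F] [Fintype K] [Fintype V] {χ : MulChar K ℂ}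
    (hχ : χ.comap (algebraMap F K) ≠ 1) {ψ : AddChar F ℂ} (hψ : ψ.IsPrimitive)
    (L : V →ₗ[F] K)
    (hL : Function.Bijective ((Algebra.linearMap F K).coprod L))
    (htr : ∀ v, Algebra.trace F K (L v) = 0) (hd : (Module.finrank F K : F) ≠ 0) :
    Fintype.card F * ((∑ v, χ (1 + L v)) * star (∑ v, χ (1 + L v))) = Fintype.card K := by
  have hK := gaussSum_mul_star_gaussSum (χ := χ) (fun h1 => hχ (by simp [h1]))
    hψ.compAddMonoidHom_trace
  have hF := gaussSum_mul_star_gaussSum hχ hψ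
  have hd' : ((Module.finrank F K : ℕ) : K) ≠ 0 := by
    rw [← map_natCast (algebraMap F K), ← map_zero (algebraMap F K)]
    exact (algebraMap F K).injective.ne hd
  have hc : star (χ (Module.finrank F K)) * χ (Module.finrank F K) = 1 := by
    rw [MulChar.star_apply', ← MulChar.mul_apply, MulChar.inv_mul, MulChar.one_apply hd'.isUnit]
  set g := gaussSum (χ.comap (algebraMap F K)) ψ
  set B := ∑ v, χ (1 + L v)
  rw [gaussSum_comp_trace_eq_star_mul_sum hχ ψ L hL htr hd] at hK
  simp only [star_mul', star_star] at hK
  linear_combination hK - (B * star B) * hF - (g * star g * B * star B) * hc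

end TraceDecomposition

theorem stmt15_general (p r : ℕ) [NeZero p] (hp : p.Prime)
    (K : Type) [Field K] [Fintype K] [Algebra (ZMod p) K]
    (hcard : Fintype.card K = p ^ r)
    (χ : MulChar K ℂ) (hord : orderOf χ = 3)
    (hres : ∃ y : ZMod p, y ≠ 0 ∧ χ (algebraMap (ZMod p) K y) ≠ 1)
    (β : ZMod p) (hirr : Irreducible (Polynomial.X ^ r - Polynomial.C β))
    (α : K) (hα : α ^ r = algebraMap (ZMod p) K β) :
    gaussSumF p K (fun y => χ y) =
      (starRingEnd ℂ) (χ (r : K)) *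
        gaussSumP p (fun y => χ (algebraMap (ZMod p) K y)) *
        Bfactor p r K (fun y => χ y) α ∧
    ∃ B0 B1 B2 : ℕ,
      Bfactor p r K (fun y => χ y) α = (B0 : ℂ) + (B1 : ℂ) * zeta3 + (B2 : ℂ) * zeta3 ^ 2 ∧
      B0 + B1 + B2 = p ^ (r - 1) ∧
      (B0 : ℤ) ^ 2 + (B1 : ℤ) ^ 2 + (B2 : ℤ) ^ 2 - B0 * B1 - B1 * B2 - B2 * B0 =
        (p : ℤ) ^ (r - 1) := by
  have := Fact.mk hp
  obtain ⟨n, rfl⟩ := Nat.exists_eq_add_one.mpr (pos_of_irreducible_X_pow_sub_C hirr)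
  have hfin : Module.finrank (ZMod p) K = n + 1 :=
    Nat.pow_right_injective hp.two_le ((FiniteField.pow_finrank_eq_card p K).trans hcard)
  set L := Fintype.linearCombination (ZMod p) fun i : Fin n => α ^ ((i : ℕ) + 1)
  have hL := bijective_coprod_linearCombination_pow_succ hirr hα hfin
  have htr := trace_linearCombination_pow_succ_eq_zero hirr hα hfin
  have hd : (Module.finrank (ZMod p) K : ZMod p) ≠ 0 :=
    hfin ▸ natCast_ne_zero_of_irreducible_X_pow_sub_C hirr
  have hχ₀ : χ.comap (algebraMap (ZMod p) K) ≠ 1 :=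
    let ⟨y, hy, hχy⟩ := hres; MulChar.ne_one_iff.mpr ⟨Units.mk0 y hy, hχy⟩
  have hζ : IsPrimitiveRoot (zetaC p) p := Complex.isPrimitiveRoot_exp p (NeZero.ne p)
  have hG :=
    gaussSum_comp_trace_eq_star_mul_sum hχ₀ (AddChar.zmodChar p hζ.pow_eq_one) L hL htr hd
  have hnorm := card_mul_sum_mul_star_eq_card hχ₀
    (AddChar.zmodChar_primitive_of_primitive_root p hζ) L hL htr hd
  rw [hfin] at hG
  rw [ZMod.card, hcard, Nat.cast_pow, pow_succ'] at hnorm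
  have hcube (z : Fin n → ZMod p) : χ (1 + L z) ^ 3 = 1 := by
    simpa [hord] using χ.apply_pow_orderOf (one_add_ne_zero_of_bijective_coprod hL z).isUnit.unit
  have hB : Bfactor p (n + 1) K (fun y => χ y) α = ∑ z, χ (1 + L z) := by
    simp [Bfactor, L, Fintype.linearCombination_apply, Algebra.smul_def]
  obtain ⟨B0, B1, B2, hsum, hcount⟩ := exists_sum_eq_natCast_add_mul_zeta3 _ hcube
  refine ⟨hB ▸ hG, B0, B1, B2, hB ▸ hsum, by simpa using hcount, ?_⟩
  have h := mul_star_intCast_add_mul_zeta3 B0 B1 B2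
  push_cast at h
  rw [← hsum, mul_left_cancel₀ (Nat.cast_ne_zero.mpr (NeZero.ne p)) hnorm] at h
  exact_mod_cast h.symm

theorem stmt15 (p r : ℕ) [NeZero p] (hp : p.Prime) (hp6 : p % 6 = 1) (hr : 2 ≤ r)
    (K : Type) [Field K] [Fintype K] [Algebra (ZMod p) K]
    (hcard : Fintype.card K = p ^ r)
    (χ : MulChar K ℂ) (hord : orderOf χ = 3)
    (hres : ∃ y : ZMod p, y ≠ 0 ∧ χ (algebraMap (ZMod p) K y) ≠ 1)
    (β : ZMod p) (hirr : Irreducible (Polynomial.X ^ r - Polynomial.C β))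
    (α : K) (hα : α ^ r = algebraMap (ZMod p) K β) :
    gaussSumF p K (fun y => χ y) =
      (starRingEnd ℂ) (χ (r : K)) *
        gaussSumP p (fun y => χ (algebraMap (ZMod p) K y)) *
        Bfactor p r K (fun y => χ y) α ∧
    ∃ B0 B1 B2 : ℕ,
      Bfactor p r K (fun y => χ y) α = (B0 : ℂ) + (B1 : ℂ) * zeta3 + (B2 : ℂ) * zeta3 ^ 2 ∧
      B0 + B1 + B2 = p ^ (r - 1) ∧
      (B0 : ℤ) ^ 2 + (B1 : ℤ) ^ 2 + (B2 : ℤ) ^ 2 - B0 * B1 - B1 * B2 - B2 * B0 =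
        (p : ℤ) ^ (r - 1) :=
  stmt15_general p r hp K hcard χ hord hres β hirr α hα
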